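/- Let F be a free group, N a normal subgroup of F such that N′ = [N,N] is torsion-free as a quotient context (F/N′ torsion-free), and let φ : F/N′ → M(F/N) be the Magnus embedding. Then two elements x̄, ȳ ∈ F/N′ are conjugate in F/N′ if and only if φ(x̄) and φ(ȳ) are conjugate in M(F/N). -/

import Mathlib

/-- The Magnus matrix group `M(Q)` (for `Q = F/N`): matrices `((g, u), (0, 1))` with
`g ∈ Q` and `u` in the free `ℤ(Q)`-module of rank `r`, under matrix multiplication
`(g,u)·(g',u') = (g g', g·u' + u)`. -/
@[ext] structure Magnus (r : ℕ) (Q : Type) [Group Q] where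
  g : Q
  u : Fin r → MonoidAlgebra ℤ Q

namespace Magnus

variable {r : ℕ} {Q : Type} [Group Q]

noncomputable instance : Mul (Magnus r Q) :=
  ⟨fun x y => ⟨x.g * y.g, fun i => MonoidAlgebra.single x.g (1 : ℤ) * y.u i + x.u i⟩⟩

noncomputable instance : One (Magnus r Q) := ⟨⟨1, 0⟩⟩

noncomputable instance : Inv (Magnus r Q) :=
  ⟨fun x => ⟨x.g⁻¹, fun i => -(MonoidAlgebra.single x.g⁻¹ (1 : ℤ) * x.u i)⟩⟩

@[simp] lemma mul_g (x y : Magnus r Q) : (x * y).g = x.g * y.g := rfl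
@[simp] lemma mul_u (x y : Magnus r Q) (i : Fin r) :
    (x * y).u i = MonoidAlgebra.single x.g (1 : ℤ) * y.u i + x.u i := rfl
@[simp] lemma one_g : (1 : Magnus r Q).g = 1 := rfl
@[simp] lemma one_u (i : Fin r) : (1 : Magnus r Q).u i = 0 := rfl
@[simp] lemma inv_g (x : Magnus r Q) : (x⁻¹).g = x.g⁻¹ := rfl
@[simp] lemma inv_u (x : Magnus r Q) (i : Fin r) :
    (x⁻¹).u i = -(MonoidAlgebra.single x.g⁻¹ (1 : ℤ) * x.u i) := rfl

noncomputable instance : Group (Magnus r Q) where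
  mul_assoc x y z := by
    refine Magnus.ext ?_ ?_
    · simp [mul_assoc]
    · funext i
      simp [mul_add, add_assoc, ← mul_assoc, MonoidAlgebra.single_mul_single]
  one_mul x := by
    refine Magnus.ext ?_ ?_
    · simp
    · funext i; simp [MonoidAlgebra.one_def.symm]
  mul_one x := by
    refine Magnus.ext ?_ ?_
    · simp
    · funext i; simp
  inv_mul_cancel x := by
    refine Magnus.ext ?_ ?_
    · simp
    · funext i; simp [← mul_assoc, MonoidAlgebra.single_mul_single]

end Magnus

/-!
Let `q` be the images in `Q = F/N` of the free generators, `ψ : F → M(Q)` the homomorphism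
with `ψ(xᵢ) = (qᵢ, eᵢ)` (so `φ` is `ψ` read on `F/N'`), and `∂u = Σ uᵢ (qᵢ - 1)` for
`u ∈ ℤQʳ`. Magnus' theorem identifies the image of `ψ` with the subgroup of all `(g, u)` with
`∂u = g - 1`. One inclusion is the fundamental formula of Fox calculus. For the other, reduce
to `g = 1`, lift `u` to `ℤF`, where the Fox derivatives invert `∂`, and write `∂` of the lift,
which lies in the kernel of `ℤF → ℤQ`, as a combination of elements `a n - a = a (n - 1)` with
`n ∈ N`: these are `∂` of `a` times the Fox derivatives of `n`, whose images are the vector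
parts of `ψ(a n a⁻¹)`.

Now let `m a m⁻¹ = b` with `a, b` in the image. Multiplying `m` by an element of the image
with the same `Q`-component, we may assume `m = (1, w)`; then `b = (g, a.u + (1 - g) w)`, and
comparing `∂` gives `g ∂w = ∂w`. If `∂τ = ∂w` and `g τ = τ`, then `(1, w - τ)` lies in the
image and still conjugates `a` to `b`. When `g` has infinite order, `0` is the only
`g`-invariant element of `ℤQ`, so `τ = 0`. When `g` has finite order, `∂w = σ s` for the norm
element `σ` of `⟨g⟩`; as `∂w` has augmentation `0`, so has `s`, hence `s = ∂t`, and `τ = σ t`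
works.
-/

namespace MonoidAlgebra

variable {Q : Type} [Group Q]

noncomputable def augmentation : MonoidAlgebra ℤ Q →ₐ[ℤ] ℤ := lift ℤ ℤ Q 1

@[simp] lemma augmentation_single (q : Q) (c : ℤ) : augmentation (single q c) = c := by
  simp [augmentation, lift_single]

lemma single_mul_eq_self_of_mem_zpowers {g h : Q} {t : MonoidAlgebra ℤ Q}
    (ht : single g 1 * t = t) (hh : h ∈ Subgroup.zpowers g) : single h 1 * t = t := by
  let stabilizer : Subgroup Q :=
    { carrier := {h | single h 1 * t = t}
      one_mem' := by simp [← one_def]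
      mul_mem' := fun {a b} ha hb => by
        rw [Set.mem_ofPred_eq, ← one_mul (1 : ℤ), ← single_mul_single, mul_assoc, hb, ha]
      inv_mem' := fun {a} ha => by
        rw [Set.mem_ofPred_eq, ← ha, ← mul_assoc, single_mul_single, inv_mul_cancel, one_mul,
          ← one_def, one_mul, ha] }
  exact Subgroup.zpowers_le.mpr (show g ∈ stabilizer from ht) hh

lemma coeff_mul_left_of_single_mul_eq_self {h : Q} {t : MonoidAlgebra ℤ Q}
    (ht : single h 1 * t = t) (x : Q) : t.coeff (h * x) = t.coeff x := by
  conv_lhs => rw [← ht]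
  rw [coeff_single_mul_apply, one_mul, inv_mul_cancel_left]

lemma eq_zero_of_single_mul_eq_self {g : Q} (hg : ¬IsOfFinOrder g) {t : MonoidAlgebra ℤ Q}
    (ht : single g 1 * t = t) : t = 0 := by
  by_contra ht0
  obtain ⟨a, ha⟩ := Finsupp.support_nonempty_iff.mpr (coeff_eq_zero.not.mpr ht0)
  refine infinite_zpowers.mpr hg <| (t.coeff.support.finite_toSet.preimage
    (mul_left_injective a).injOn).subset fun h hh => ?_
  rw [Set.mem_preimage, Finset.mem_coe, Finsupp.mem_support_iff,
    coeff_mul_left_of_single_mul_eq_self (single_mul_eq_self_of_mem_zpowers ht hh)]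
  exact Finsupp.mem_support_iff.mp ha

noncomputable def normElement (H : Subgroup Q) [Fintype H] : MonoidAlgebra ℤ Q :=
  ∑ h : H, single (h : Q) 1

lemma single_mul_normElement {H : Subgroup Q} [Fintype H] {h : Q} (hh : h ∈ H) :
    single h 1 * normElement H = normElement H := by
  rw [normElement, Finset.mul_sum]
  refine Fintype.sum_equiv (Equiv.mulLeft ⟨h, hh⟩) _ _ fun k => ?_
  rw [single_mul_single, one_mul]
  rfl

lemma augmentation_normElement (H : Subgroup Q) [Fintype H] :
    augmentation (normElement H) = Fintype.card H := by
  simp [normElement]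

lemma exists_eq_normElement_mul {H : Subgroup Q} [Fintype H] {t : MonoidAlgebra ℤ Q}
    (ht : ∀ h ∈ H, single h 1 * t = t) : ∃ s, t = normElement H * s := by
  classical
  let rep : Q → Q := fun x => (Quotient.mk (QuotientGroup.rightRel H) x).out
  have hrep : ∀ x, x * (rep x)⁻¹ ∈ H := fun x =>
    QuotientGroup.rightRel_apply.mp (Quotient.mk_out (s := QuotientGroup.rightRel H) x)
  have hrep_mul : ∀ h ∈ H, ∀ x, rep (h * x) = rep x := fun h hh x =>
    congrArg Quotient.out <| Quotient.sound <| QuotientGroup.rightRel_apply.mpr <| by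
      simpa [mul_assoc] using hh
  -- `s` keeps the coefficients of `t` at one representative of each coset `H x`.
  refine ⟨ofCoeff (t.coeff.filter fun x => rep x = x), ?_⟩
  ext x
  rw [normElement, Finset.sum_mul, coeff_sum, Finset.sum_apply']
  simp only [coeff_single_mul_apply, one_mul, Finsupp.filter_apply]
  calc t.coeff x = ∑ h : H, if h = ⟨x * (rep x)⁻¹, hrep x⟩ then t.coeff x else 0 := by simp
    _ = _ := Finset.sum_congr rfl fun h _ => by
      rw [hrep_mul _ (H.inv_mem h.2), coeff_mul_left_of_single_mul_eq_self (ht _ (H.inv_mem h.2))]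
      refine if_congr ?_ rfl rfl
      rw [Subtype.ext_iff, eq_inv_mul_iff_mul_eq, eq_mul_inv_iff_mul_eq]

end MonoidAlgebra

lemma FreeGroup.lift_comp_of {α G : Type*} [Group G] (f : α → G) :
    FreeGroup.lift f ∘ FreeGroup.of = f :=
  funext fun _ => FreeGroup.lift_apply_of

namespace Magnus

open MonoidAlgebra

variable {r : ℕ} {Q : Type} [Group Q]

lemma mul_u_eq_smul_add (m m' : Magnus r Q) :
    (m * m').u = single m.g (1 : ℤ) • m'.u + m.u :=
  rfl

lemma inv_u_eq_neg_smul (m : Magnus r Q) : m⁻¹.u = -(single m.g⁻¹ (1 : ℤ) • m.u) := rfl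

lemma mk_one_mul_mul_inv (w : Fin r → MonoidAlgebra ℤ Q) (m : Magnus r Q) :
    (⟨1, w⟩ : Magnus r Q) * m * (⟨1, w⟩ : Magnus r Q)⁻¹ =
      ⟨m.g, m.u + w - single m.g (1 : ℤ) • w⟩ := by
  refine Magnus.ext (by simp) (funext fun i => ?_)
  simp [← one_def, sub_eq_add_neg, add_comm]

lemma mul_mk_one_mul_inv (m : Magnus r Q) (u : Fin r → MonoidAlgebra ℤ Q) :
    m * (⟨1, u⟩ : Magnus r Q) * m⁻¹ = ⟨1, single m.g (1 : ℤ) • u⟩ := by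
  refine Magnus.ext (by simp) (funext fun i => ?_)
  simp [← mul_assoc, single_mul_single, ← one_def]

lemma mul_inv_eq_mk_one {m t : Magnus r Q} (h : m.g = t.g) : m * t⁻¹ = ⟨1, (m * t⁻¹).u⟩ :=
  Magnus.ext (by simp [h]) rfl

def baseSubgroup (H : Subgroup (Magnus r Q)) : AddSubgroup (Fin r → MonoidAlgebra ℤ Q) where
  carrier := {u | (⟨1, u⟩ : Magnus r Q) ∈ H}
  zero_mem' := H.one_mem
  add_mem' {u u'} (hu : _ ∈ H) (hu' : _ ∈ H) := by
    have h : (⟨1, u + u'⟩ : Magnus r Q) = ⟨1, u⟩ * ⟨1, u'⟩ :=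
      Magnus.ext (mul_one 1).symm (by rw [mul_u_eq_smul_add, ← one_def, one_smul, add_comm])
    change _ ∈ H
    exact h ▸ H.mul_mem hu hu'
  neg_mem' {u} (hu : _ ∈ H) := by
    have h : (⟨1, -u⟩ : Magnus r Q) = ⟨1, u⟩⁻¹ :=
      Magnus.ext inv_one.symm (by rw [inv_u_eq_neg_smul, inv_one, ← one_def, one_smul])
    change _ ∈ H
    exact h ▸ H.inv_mem hu

lemma mk_one_mem_iff_mem_baseSubgroup {H : Subgroup (Magnus r Q)}
    {u : Fin r → MonoidAlgebra ℤ Q} :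
    (⟨1, u⟩ : Magnus r Q) ∈ H ↔ u ∈ baseSubgroup H :=
  Iff.rfl

lemma smul_mem_baseSubgroup {H : Subgroup (Magnus r Q)} {m : Magnus r Q} (hm : m ∈ H)
    {u : Fin r → MonoidAlgebra ℤ Q} (hu : u ∈ baseSubgroup H) :
    single m.g (1 : ℤ) • u ∈ baseSubgroup H := by
  rw [← mk_one_mem_iff_mem_baseSubgroup, ← mul_mk_one_mul_inv]
  exact H.mul_mem (H.mul_mem hm hu) (H.inv_mem hm)

def gHom : Magnus r Q →* Q where
  toFun := g
  map_one' := rfl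
  map_mul' _ _ := rfl

noncomputable def freeLift (q : Fin r → Q) : FreeGroup (Fin r) →* Magnus r Q :=
  FreeGroup.lift fun i => ⟨q i, Pi.single i 1⟩

@[simp] lemma freeLift_of (q : Fin r → Q) (i : Fin r) :
    freeLift q (FreeGroup.of i) = ⟨q i, Pi.single i 1⟩ :=
  FreeGroup.lift_apply_of

@[simp] lemma freeLift_g (q : Fin r → Q) (f : FreeGroup (Fin r)) :
    (freeLift q f).g = FreeGroup.lift q f := by
  change gHom.comp (freeLift q) f = _
  congr 1
  exact FreeGroup.ext_hom _ _ fun i => by simp [gHom]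

section Map

variable {Q' : Type} [Group Q']

noncomputable def map (f : Q →* Q') : Magnus r Q →* Magnus r Q' where
  toFun m := ⟨f m.g, fun i => mapDomain f (m.u i)⟩
  map_one' := Magnus.ext (by simp) (funext fun i => by simp)
  map_mul' m m' := Magnus.ext (by simp) (funext fun i => by simp [mapDomain_add, mapDomain_mul])

lemma map_freeLift (f : Q →* Q') (q : Fin r → Q) (x : FreeGroup (Fin r)) :
    map f (freeLift q x) = freeLift (f ∘ q) x := by
  change (map f).comp (freeLift q) x = _
  congr 1
  refine FreeGroup.ext_hom _ _ fun i => Magnus.ext (by simp [map]) (funext fun j => ?_)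
  rcases eq_or_ne j i with rfl | hj <;> simp [map, Pi.single_apply, *]

end Map

noncomputable def foxBoundary (q : Fin r → Q) :
    (Fin r → MonoidAlgebra ℤ Q) →ₗ[MonoidAlgebra ℤ Q] MonoidAlgebra ℤ Q :=
  Fintype.linearCombination _ fun i => single (q i) 1 - 1

lemma foxBoundary_apply (q : Fin r → Q) (u : Fin r → MonoidAlgebra ℤ Q) :
    foxBoundary q u = ∑ i, u i * (single (q i) 1 - 1) :=
  rfl

lemma augmentation_foxBoundary (q : Fin r → Q) (u : Fin r → MonoidAlgebra ℤ Q) :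
    augmentation (foxBoundary q u) = 0 := by
  simp [foxBoundary_apply]

lemma mapDomain_foxBoundary {Q' : Type} [Group Q'] (f : Q →* Q') (q : Fin r → Q)
    (u : Fin r → MonoidAlgebra ℤ Q) :
    mapDomain f (foxBoundary q u) = foxBoundary (f ∘ q) fun i => mapDomain f (u i) := by
  change mapDomainRingHom ℤ f _ = _
  simp only [foxBoundary_apply, map_sum, map_mul, map_sub, map_one]
  simp

def foxSubgroup (q : Fin r → Q) : Subgroup (Magnus r Q) where
  carrier := {m | foxBoundary q m.u = single m.g 1 - 1}
  one_mem' := show foxBoundary q 0 = single 1 1 - 1 by simp [← one_def]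
  mul_mem' {m m'} (hm : foxBoundary q m.u = _) (hm' : foxBoundary q m'.u = _) := by
    change foxBoundary q (m * m').u = _
    rw [mul_u_eq_smul_add, map_add, map_smul, hm, hm', smul_eq_mul, mul_sub, single_mul_single,
      mul_one, mul_one, mul_g]
    abel
  inv_mem' {m} (hm : foxBoundary q m.u = _) := by
    change foxBoundary q m⁻¹.u = _
    rw [inv_u_eq_neg_smul, map_neg, map_smul, hm, smul_eq_mul, mul_sub, single_mul_single,
      inv_mul_cancel, mul_one, mul_one, inv_g, ← one_def]
    abel

lemma mem_foxSubgroup {q : Fin r → Q} {m : Magnus r Q} :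
    m ∈ foxSubgroup q ↔ foxBoundary q m.u = single m.g 1 - 1 :=
  Iff.rfl

lemma mk_one_mem_foxSubgroup {q : Fin r → Q} {u : Fin r → MonoidAlgebra ℤ Q} :
    (⟨1, u⟩ : Magnus r Q) ∈ foxSubgroup q ↔ foxBoundary q u = 0 := by
  rw [mem_foxSubgroup, ← one_def, sub_self]

lemma freeLift_mem_foxSubgroup (q : Fin r → Q) (f : FreeGroup (Fin r)) :
    freeLift q f ∈ foxSubgroup q := by
  induction f using FreeGroup.induction_on with
  | C1 => exact (freeLift q).map_one ▸ (foxSubgroup q).one_mem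
  | of i => simp [mem_foxSubgroup, foxBoundary]
  | inv_of i h => exact (map_inv (freeLift q) _).symm ▸ (foxSubgroup q).inv_mem h
  | mul a b ha hb => exact (map_mul (freeLift q) a b).symm ▸ (foxSubgroup q).mul_mem ha hb

lemma freeLift_of_g (x : FreeGroup (Fin r)) : (freeLift FreeGroup.of x).g = x := by
  simp [FreeGroup.lift_of_apply]

lemma freeLift_of_mul_u (x y : FreeGroup (Fin r)) :
    (freeLift FreeGroup.of (x * y)).u =
      single x (1 : ℤ) • (freeLift FreeGroup.of y).u + (freeLift FreeGroup.of x).u := by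
  rw [map_mul, mul_u_eq_smul_add, freeLift_of_g]

lemma freeLift_u (q : Fin r → Q) (x : FreeGroup (Fin r)) (i : Fin r) :
    (freeLift q x).u i = mapDomain (FreeGroup.lift q) ((freeLift FreeGroup.of x).u i) := by
  conv_lhs => rw [← FreeGroup.lift_comp_of q, ← map_freeLift]
  rfl

-- `(freeLift FreeGroup.of x).u` is the vector of Fox derivatives `∂x/∂xᵢ`.
noncomputable def foxDerivative (i : Fin r) :
    MonoidAlgebra ℤ (FreeGroup (Fin r)) →+ MonoidAlgebra ℤ (FreeGroup (Fin r)) :=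
  liftNC (Int.castAddHom _) fun x => (freeLift FreeGroup.of x).u i

lemma foxDerivative_single (i : Fin r) (x : FreeGroup (Fin r)) (c : ℤ) :
    foxDerivative i (single x c) = c • (freeLift FreeGroup.of x).u i := by
  simp [foxDerivative, liftNC_single, zsmul_eq_mul]

lemma foxDerivative_mul_sub_one (i j : Fin r) (v : MonoidAlgebra ℤ (FreeGroup (Fin r))) :
    foxDerivative i (v * (single (FreeGroup.of j) 1 - 1)) = if i = j then v else 0 := by
  induction v using MonoidAlgebra.induction_linear with
  | zero => simp
  | add v v' hv hv' => rw [add_mul, map_add, hv, hv']; split_ifs <;> simp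
  | single x c =>
    rw [mul_sub, mul_one, single_mul_single, mul_one, map_sub, foxDerivative_single,
      foxDerivative_single, freeLift_of_mul_u]
    rcases eq_or_ne i j with rfl | hij <;> simp [*]

lemma foxDerivative_foxBoundary (v : Fin r → MonoidAlgebra ℤ (FreeGroup (Fin r))) (i : Fin r) :
    foxDerivative i (foxBoundary FreeGroup.of v) = v i := by
  simp [foxBoundary_apply, foxDerivative_mul_sub_one]

variable {q : Fin r → Q}

lemma foxDerivative_single_mul_sub_single_mem {n : FreeGroup (Fin r)}
    (hn : FreeGroup.lift q n = 1) (a : FreeGroup (Fin r)) (c : ℤ) :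
    (fun i => mapDomain (FreeGroup.lift q) (foxDerivative i (single (a * n) c - single a c))) ∈
      baseSubgroup (freeLift q).range := by
  have hn_mem : (freeLift q n).u ∈ baseSubgroup (freeLift q).range := by
    rw [← mk_one_mem_iff_mem_baseSubgroup, show (⟨1, (freeLift q n).u⟩ : Magnus r Q) =
      freeLift q n from Magnus.ext (by simp [hn]) rfl]
    exact MonoidHom.mem_range.mpr ⟨n, rfl⟩
  convert (baseSubgroup _).zsmul_mem
    (smul_mem_baseSubgroup (MonoidHom.mem_range.mpr ⟨a, rfl⟩) hn_mem) c using 2 with i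
  simp [freeLift_u q n, foxDerivative_single, FreeGroup.lift_of_apply, mapDomain_mul]
  exact congrArg (· * _) (map_intCast (mapDomainRingHom ℤ (FreeGroup.lift q)) c)

lemma foxDerivative_mem_baseSubgroup (hq : Function.Surjective (FreeGroup.lift q))
    {z : MonoidAlgebra ℤ (FreeGroup (Fin r))} (hz : mapDomain (FreeGroup.lift q) z = 0) :
    (fun i => mapDomain (FreeGroup.lift q) (foxDerivative i z)) ∈
      baseSubgroup (freeLift q).range := by
  set B := baseSubgroup (freeLift q).range
  -- `s` picks a point in each fibre of `F → Q`, so `x = s x * n` with `n ↦ 1`; and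
  -- `mapDomain s z = 0` because `mapDomain s` factors through `mapDomain (FreeGroup.lift q)`.
  let s := Function.surjInv hq ∘ FreeGroup.lift q
  have hsz : mapDomain s z = 0 := by
    have h0 : Finsupp.mapDomain (FreeGroup.lift q) z.coeff = 0 := congrArg coeff hz
    simp [s, mapDomain, Finsupp.mapDomain_comp, h0]
  suffices ∀ z,
      (fun i => mapDomain (FreeGroup.lift q) (foxDerivative i (z - mapDomain s z))) ∈ B by
    simpa [hsz] using this z
  intro z
  induction z using MonoidAlgebra.induction_linear with
  | zero =>
    simp only [mapDomain_zero, sub_zero, map_zero]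
    exact B.zero_mem
  | add z z' hz hz' =>
    convert B.add_mem hz hz' using 1
    funext i
    simp only [mapDomain_add, add_sub_add_comm, map_add, Pi.add_apply]
  | single x c =>
    obtain ⟨n, hn, hxn⟩ : ∃ n, FreeGroup.lift q n = 1 ∧ s x * n = x :=
      ⟨(s x)⁻¹ * x, by simp [s, Function.surjInv_eq hq], by group⟩
    rw [mapDomain_single]
    simpa only [hxn] using foxDerivative_single_mul_sub_single_mem hn (s x) c

lemma mk_one_mem_range_freeLift (hq : Function.Surjective (FreeGroup.lift q))
    {u : Fin r → MonoidAlgebra ℤ Q} (hu : foxBoundary q u = 0) :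
    (⟨1, u⟩ : Magnus r Q) ∈ (freeLift q).range := by
  let v := fun i => mapDomain (Function.surjInv hq) (u i)
  have hv : (fun i => mapDomain (FreeGroup.lift q) (v i)) = u := funext fun i => by
    simp [v, mapDomain, ← Finsupp.mapDomain_comp, (Function.rightInverse_surjInv hq).comp_eq_id]
  have hz : mapDomain (FreeGroup.lift q) (foxBoundary FreeGroup.of v) = 0 := by
    rw [mapDomain_foxBoundary, FreeGroup.lift_comp_of, hv, hu]
  rw [mk_one_mem_iff_mem_baseSubgroup]
  simpa only [foxDerivative_foxBoundary, hv] using foxDerivative_mem_baseSubgroup hq hz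

theorem range_freeLift (hq : Function.Surjective (FreeGroup.lift q)) :
    (freeLift q).range = foxSubgroup q := by
  refine le_antisymm (fun _ ⟨f, hf⟩ => hf ▸ freeLift_mem_foxSubgroup q f) fun m hm => ?_
  obtain ⟨f, hf⟩ := hq m.g
  have hmf := mul_inv_eq_mk_one (m := m) (t := freeLift q f) (by simp [hf])
  have hw := (foxSubgroup q).mul_mem hm ((foxSubgroup q).inv_mem (freeLift_mem_foxSubgroup q f))
  rw [hmf, mk_one_mem_foxSubgroup] at hw
  simpa [← hmf] using (freeLift q).range.mul_mem (mk_one_mem_range_freeLift hq hw)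
    (MonoidHom.mem_range.mpr ⟨f, rfl⟩)

lemma exists_foxBoundary_eq_sub_augmentation (hq : Function.Surjective (FreeGroup.lift q))
    (s : MonoidAlgebra ℤ Q) : ∃ t, foxBoundary q t = s - single 1 (augmentation s) := by
  induction s using MonoidAlgebra.induction_linear with
  | zero => exact ⟨0, by simp⟩
  | add s s' hs hs' =>
    obtain ⟨t, ht⟩ := hs
    obtain ⟨t', ht'⟩ := hs'
    exact ⟨t + t', by rw [map_add, ht, ht', map_add, single_add]; abel⟩
  | single p c =>
    obtain ⟨f, rfl⟩ := hq p
    refine ⟨c • (freeLift q f).u, ?_⟩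
    rw [map_zsmul, mem_foxSubgroup.mp (freeLift_mem_foxSubgroup q f), freeLift_g]
    simp [smul_sub, one_def]

lemma exists_foxBoundary_eq_of_single_mul_eq_self (hq : Function.Surjective (FreeGroup.lift q))
    {g : Q} {a : MonoidAlgebra ℤ Q} (hga : single g 1 * a = a) (ha : augmentation a = 0) :
    ∃ τ, foxBoundary q τ = a ∧ single g (1 : ℤ) • τ = τ := by
  by_cases hg : IsOfFinOrder g
  · have := hg.finite_zpowers.fintype
    obtain ⟨s, rfl⟩ :=
      exists_eq_normElement_mul fun h hh => single_mul_eq_self_of_mem_zpowers hga hh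
    have hs : augmentation s = 0 := by
      simpa [augmentation_normElement, Fintype.card_ne_zero] using ha
    obtain ⟨t, ht⟩ := exists_foxBoundary_eq_sub_augmentation hq s
    refine ⟨normElement (Subgroup.zpowers g) • t, ?_, ?_⟩
    · rw [map_smul, ht, hs, single_zero, sub_zero, smul_eq_mul]
    · rw [smul_smul, single_mul_normElement (Subgroup.mem_zpowers g)]
  · exact ⟨0, by simp [eq_zero_of_single_mul_eq_self hg hga], smul_zero _⟩

lemma exists_mem_foxSubgroup_mul_mul_inv_eq_of_mk_one
    (hq : Function.Surjective (FreeGroup.lift q)) {a : Magnus r Q} (ha : a ∈ foxSubgroup q)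
    {w : Fin r → MonoidAlgebra ℤ Q}
    (hb : (⟨1, w⟩ : Magnus r Q) * a * (⟨1, w⟩ : Magnus r Q)⁻¹ ∈ foxSubgroup q) :
    ∃ c ∈ foxSubgroup q,
      c * a * c⁻¹ = (⟨1, w⟩ : Magnus r Q) * a * (⟨1, w⟩ : Magnus r Q)⁻¹ := by
  rw [mk_one_mul_mul_inv, mem_foxSubgroup] at hb
  rw [mem_foxSubgroup] at ha
  have hw : single a.g 1 * foxBoundary q w = foxBoundary q w := by
    rw [map_sub, map_add, map_smul, ha, smul_eq_mul, add_sub_assoc, add_eq_left, sub_eq_zero] at hb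
    exact hb.symm
  obtain ⟨τ, hτ, hgτ⟩ :=
    exists_foxBoundary_eq_of_single_mul_eq_self hq hw (augmentation_foxBoundary q w)
  refine ⟨⟨1, w - τ⟩, by rw [mk_one_mem_foxSubgroup, map_sub, hτ, sub_self], ?_⟩
  rw [mk_one_mul_mul_inv, mk_one_mul_mul_inv, smul_sub, hgτ]
  congr 1
  abel

theorem exists_mem_foxSubgroup_mul_mul_inv_eq (hq : Function.Surjective (FreeGroup.lift q))
    {a b : Magnus r Q} (ha : a ∈ foxSubgroup q) (hb : b ∈ foxSubgroup q) (hab : IsConj a b) :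
    ∃ c ∈ foxSubgroup q, c * a * c⁻¹ = b := by
  obtain ⟨m, rfl⟩ := isConj_iff.mp hab
  obtain ⟨f, hf⟩ := hq m.g
  set t := freeLift q f
  have ht : t ∈ foxSubgroup q := freeLift_mem_foxSubgroup q f
  have hconj : m * a * m⁻¹ = (m * t⁻¹) * (t * a * t⁻¹) * (m * t⁻¹)⁻¹ := by group
  rw [hconj, mul_inv_eq_mk_one (m := m) (t := t) (by simp [t, hf])] at hb ⊢
  obtain ⟨c, hc, hca⟩ := exists_mem_foxSubgroup_mul_mul_inv_eq_of_mk_one hq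
    ((foxSubgroup q).mul_mem ((foxSubgroup q).mul_mem ht ha) ((foxSubgroup q).inv_mem ht)) hb
  exact ⟨c * t, (foxSubgroup q).mul_mem hc ht, by rw [← hca]; group⟩

end Magnus

theorem magnus_embedding_preserves_conjugacy_general (r : ℕ)
    (N : Subgroup (FreeGroup (Fin r))) [N.Normal]
    (φ : (FreeGroup (Fin r) ⧸ (⁅N, N⁆ : Subgroup (FreeGroup (Fin r)))) →*
        Magnus r (FreeGroup (Fin r) ⧸ N))
    (hinj : Function.Injective φ)
    (hgen : ∀ i : Fin r, φ (QuotientGroup.mk (FreeGroup.of i)) =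
      ⟨QuotientGroup.mk (FreeGroup.of i), Pi.single i 1⟩)
    (x y : FreeGroup (Fin r) ⧸ (⁅N, N⁆ : Subgroup (FreeGroup (Fin r)))) :
    IsConj x y ↔ IsConj (φ x) (φ y) := by
  let q : Fin r → FreeGroup (Fin r) ⧸ N := fun i => QuotientGroup.mk (FreeGroup.of i)
  have hq : Function.Surjective (FreeGroup.lift q) := by
    rw [show FreeGroup.lift q = QuotientGroup.mk' N from FreeGroup.ext_hom _ _ fun i => by simp [q]]
    exact QuotientGroup.mk'_surjective N
  have hrange : φ.range = Magnus.foxSubgroup q := by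
    have hφ : φ.comp (QuotientGroup.mk' _) = Magnus.freeLift q :=
      FreeGroup.ext_hom _ _ fun i => (hgen i).trans (Magnus.freeLift_of q i).symm
    rw [← Magnus.range_freeLift hq, ← hφ, MonoidHom.range_comp,
      MonoidHom.range_eq_top_of_surjective _ (QuotientGroup.mk'_surjective _),
      ← MonoidHom.range_eq_map]
  refine ⟨φ.map_isConj, fun h => ?_⟩
  obtain ⟨c, hc, hcxy⟩ := Magnus.exists_mem_foxSubgroup_mul_mul_inv_eq hq
    (hrange ▸ φ.mem_range.mpr ⟨x, rfl⟩) (hrange ▸ φ.mem_range.mpr ⟨y, rfl⟩) h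
  obtain ⟨z, rfl⟩ := φ.mem_range.mp (hrange ▸ hc)
  exact isConj_iff.mpr ⟨z, hinj (by simpa using hcxy)⟩

/-- Remeslennikov–Sokolov: if `F/N'` is torsion-free (`N' = [N,N]`) and
`φ : F/N' → M(F/N)` is the Magnus embedding (the injective homomorphism sending the
class of the `i`-th generator to `((μ(x_i), u_i), (0,1))`), then `x̄, ȳ ∈ F/N'` are
conjugate in `F/N'` if and only if `φ(x̄)` and `φ(ȳ)` are conjugate in `M(F/N)`. -/
theorem magnus_embedding_preserves_conjugacy (r : ℕ)
    (N : Subgroup (FreeGroup (Fin r))) [N.Normal]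
    (htf : ∀ z : FreeGroup (Fin r) ⧸ (⁅N, N⁆ : Subgroup (FreeGroup (Fin r))),
      z ≠ 1 → ¬ IsOfFinOrder z)
    (φ : (FreeGroup (Fin r) ⧸ (⁅N, N⁆ : Subgroup (FreeGroup (Fin r)))) →*
        Magnus r (FreeGroup (Fin r) ⧸ N))
    (hinj : Function.Injective φ)
    (hgen : ∀ i : Fin r, φ (QuotientGroup.mk (FreeGroup.of i)) =
      ⟨QuotientGroup.mk (FreeGroup.of i), Pi.single i 1⟩)
    (x y : FreeGroup (Fin r) ⧸ (⁅N, N⁆ : Subgroup (FreeGroup (Fin r)))) :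
    IsConj x y ↔ IsConj (φ x) (φ y) :=
  magnus_embedding_preserves_conjugacy_general r N φ hinj hgen x y
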